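/- arXiv:2107.07469 — 4 statements merged into one kernel-verified Lean document; each statement's English description precedes it below -/
import Mathlib

section
/- Define in M the Hamiltonians H¹² = (1/2)•(1₂⊗1₂⊗1₂ + σ⊗σ⊗1₂), H¹³ = (1/2)•(1₂⊗1₂⊗1₂ + σ⊗1₂⊗σ), and H²³ = (1/2)•(1₂⊗1₂⊗1₂ + 1₂⊗σ⊗σ). Then H¹², H¹³, H²³ pairwise commute, and Matrix.exp(β•H¹² + β•H¹³ + (J*β)•H²³) = A. -/
open Matrix Kronecker

noncomputable section

/-- The Pauli z-matrix. -/
def σz : Matrix (Fin 2) (Fin 2) ℂ := !![1, 0; 0, -1]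

/-- The threefold tensor product `M₂ ⊗ M₂ ⊗ M₂`, realized via Kronecker products. -/
abbrev M3 : Type := Matrix (Fin 2 × Fin 2 × Fin 2) (Fin 2 × Fin 2 × Fin 2) ℂ

/-- `tp a b c` is the elementary tensor `a ⊗ b ⊗ c` in `M₂ ⊗ M₂ ⊗ M₂`. -/
def tp (a b c : Matrix (Fin 2) (Fin 2) ℂ) : M3 := a ⊗ₖ (b ⊗ₖ c)

def K₀ (β : ℝ) : ℝ := (Real.exp β + 1) / 2
def K₃ (β : ℝ) : ℝ := (Real.exp β - 1) / 2
def R₀ (β J : ℝ) : ℝ := (Real.exp (J * β) + 1) / 2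
def R₃ (β J : ℝ) : ℝ := (Real.exp (J * β) - 1) / 2

/-- `K¹² = K₀•(1⊗1⊗1) + K₃•(σ⊗σ⊗1)`. -/
def K12 (β : ℝ) : M3 := ((K₀ β : ℝ) : ℂ) • tp 1 1 1 + ((K₃ β : ℝ) : ℂ) • tp σz σz 1

/-- `K¹³ = K₀•(1⊗1⊗1) + K₃•(σ⊗1⊗σ)`. -/
def K13 (β : ℝ) : M3 := ((K₀ β : ℝ) : ℂ) • tp 1 1 1 + ((K₃ β : ℝ) : ℂ) • tp σz 1 σz

/-- `L²³ = R₀•(1⊗1⊗1) + R₃•(1⊗σ⊗σ)`. -/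
def L23 (β J : ℝ) : M3 := ((R₀ β J : ℝ) : ℂ) • tp 1 1 1 + ((R₃ β J : ℝ) : ℂ) • tp 1 σz σz

/-- The transfer operator `A = K¹² K¹³ L²³` of the Ising model with competing interactions. -/
def A (β J : ℝ) : M3 := K12 β * K13 β * L23 β J

/-- `H¹² = (1/2)•(1⊗1⊗1 + σ⊗σ⊗1)`. -/
def H12 : M3 := (1 / 2 : ℂ) • (tp 1 1 1 + tp σz σz 1)

/-- `H¹³ = (1/2)•(1⊗1⊗1 + σ⊗1⊗σ)`. -/
def H13 : M3 := (1 / 2 : ℂ) • (tp 1 1 1 + tp σz 1 σz)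

/-- `H²³ = (1/2)•(1⊗1⊗1 + 1⊗σ⊗σ)`. -/
def H23 : M3 := (1 / 2 : ℂ) • (tp 1 1 1 + tp 1 σz σz)

/-!
Each Hamiltonian has the form `q = (1 + P) / 2` with `P` an involution (a tensor product of
copies of `σz` and `1`), so `q` is idempotent and its exponential series collapses to
`exp (t • q) = (1 - q) + eᵗ • q = ((eᵗ + 1) / 2) • 1 + ((eᵗ - 1) / 2) • P`, which is the
corresponding factor of the transfer operator. The involutions are tensor products of pairwise
commuting factors, hence commute, so the exponential of the sum is the product of the three
exponentials.
-/

open NormedSpace Nat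

section ExpOfIdempotent

variable {𝕂 𝔸 : Type*} [RCLike 𝕂] [NormedRing 𝔸] [NormedAlgebra 𝕂 𝔸] [CompleteSpace 𝔸]

-- The exponential series collapses because `q ^ n = q` for `n ≥ 1`.
theorem IsIdempotentElem.exp_smul {q : 𝔸} (hq : IsIdempotentElem q) (t : 𝕂) :
    exp (t • q) = (1 - q) + exp t • q := by
  have hterm : ∀ n : ℕ, (n ! : 𝕂)⁻¹ • (t • q) ^ n
      = ((n ! : 𝕂)⁻¹ • t ^ n) • q + if n = 0 then 1 - q else 0 := by
    rintro (_ | n)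
    · simp
    · simp [smul_pow, hq.pow_succ_eq, smul_smul]
  have hsum : HasSum (fun n : ℕ => (n ! : 𝕂)⁻¹ • (t • q) ^ n) (exp t • q + (1 - q)) := by
    simp only [hterm]
    exact ((exp_series_hasSum_exp' (𝕂 := 𝕂) t).smul_const q).add (hasSum_ite_eq 0 (1 - q))
  rw [add_comm]
  exact (exp_series_hasSum_exp' (𝕂 := 𝕂) (t • q)).unique hsum

theorem exp_smul_half_one_add_of_mul_self_eq_one {p : 𝔸} (hp : p * p = 1) (t : 𝕂) :
    exp (t • ((1 / 2 : 𝕂) • (1 + p))) = ((exp t + 1) / 2) • 1 + ((exp t - 1) / 2) • p := by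
  have hq : IsIdempotentElem ((1 / 2 : 𝕂) • (1 + p)) := by
    rw [IsIdempotentElem, smul_mul_smul, add_mul, mul_add, mul_add, hp, one_mul, mul_one, one_mul]
    module
  rw [hq.exp_smul]
  module

end ExpOfIdempotent

theorem Matrix.exp_smul_half_one_add_of_mul_self_eq_one {𝕂 n : Type*} [RCLike 𝕂] [Fintype n]
    [DecidableEq n] {P : Matrix n n 𝕂} (hP : P * P = 1) (t : 𝕂) :
    exp (t • ((1 / 2 : 𝕂) • (1 + P))) = ((exp t + 1) / 2) • 1 + ((exp t - 1) / 2) • P :=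
  open scoped Norms.Operator in _root_.exp_smul_half_one_add_of_mul_self_eq_one hP t

theorem σz_mul_self : σz * σz = 1 := by
  ext i j
  fin_cases i <;> fin_cases j <;> simp [σz]

theorem tp_mul_tp (a b c a' b' c' : Matrix (Fin 2) (Fin 2) ℂ) :
    tp a b c * tp a' b' c' = tp (a * a') (b * b') (c * c') := by
  simp only [tp, mul_kronecker_mul]

theorem tp_one : tp 1 1 1 = 1 := by
  simp only [tp, one_kronecker_one]

theorem commute_tp {a b c a' b' c' : Matrix (Fin 2) (Fin 2) ℂ} (ha : Commute a a')
    (hb : Commute b b') (hc : Commute c c') : Commute (tp a b c) (tp a' b' c') := by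
  rw [Commute, SemiconjBy, tp_mul_tp, tp_mul_tp, ha.eq, hb.eq, hc.eq]

theorem tp_mul_self_eq_one {a b c : Matrix (Fin 2) (Fin 2) ℂ} (ha : a * a = 1) (hb : b * b = 1)
    (hc : c * c = 1) : tp a b c * tp a b c = 1 := by
  rw [tp_mul_tp, ha, hb, hc, tp_one]

theorem commute_half_one_add_tp {a b c a' b' c' : Matrix (Fin 2) (Fin 2) ℂ} (ha : Commute a a')
    (hb : Commute b b') (hc : Commute c c') :
    Commute ((1 / 2 : ℂ) • (tp 1 1 1 + tp a b c)) ((1 / 2 : ℂ) • (tp 1 1 1 + tp a' b' c')) := by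
  rw [tp_one]
  exact (((Commute.one_right _).add_right
    ((Commute.one_left _).add_left (commute_tp ha hb hc))).smul_left _).smul_right _

theorem exp_ofReal_smul_half_one_add_tp {a b c : Matrix (Fin 2) (Fin 2) ℂ}
    (h : tp a b c * tp a b c = 1) (t : ℝ) :
    exp ((t : ℂ) • ((1 / 2 : ℂ) • (tp 1 1 1 + tp a b c))) =
      (((Real.exp t + 1) / 2 : ℝ) : ℂ) • tp 1 1 1 + (((Real.exp t - 1) / 2 : ℝ) : ℂ) • tp a b c := by
  rw [tp_one, Matrix.exp_smul_half_one_add_of_mul_self_eq_one h, ← Complex.exp_eq_exp_ℂ]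
  push_cast
  rfl

theorem ising_hamiltonians_commute_and_exp_eq_transfer_operator_general
    (β J : ℝ) :
    Commute H12 H13 ∧ Commute H12 H23 ∧ Commute H13 H23 ∧
      NormedSpace.exp ((β : ℂ) • H12 + (β : ℂ) • H13 + ((J * β : ℝ) : ℂ) • H23) = A β J := by
  have hσ_comm : Commute σz σz := Commute.refl σz
  have h12_13 : Commute H12 H13 :=
    commute_half_one_add_tp hσ_comm (Commute.one_right σz) (Commute.one_left σz)
  have h12_23 : Commute H12 H23 :=
    commute_half_one_add_tp (Commute.one_right σz) hσ_comm (Commute.one_left σz)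
  have h13_23 : Commute H13 H23 :=
    commute_half_one_add_tp (Commute.one_right σz) (Commute.one_left σz) hσ_comm
  refine ⟨h12_13, h12_23, h13_23, ?_⟩
  have hsum_commute : Commute ((β : ℂ) • H12 + (β : ℂ) • H13) (((J * β : ℝ) : ℂ) • H23) :=
    ((h12_23.smul_left _).add_left (h13_23.smul_left _)).smul_right _
  rw [Matrix.exp_add_of_commute _ _ hsum_commute,
    Matrix.exp_add_of_commute _ _ ((h12_13.smul_left _).smul_right _)]
  have hσ_sq : σz * σz = 1 := σz_mul_self
  have h1_sq : (1 : Matrix (Fin 2) (Fin 2) ℂ) * 1 = 1 := mul_one 1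
  exact congr_arg₂ (· * ·)
    (congr_arg₂ (· * ·)
      (exp_ofReal_smul_half_one_add_tp (tp_mul_self_eq_one hσ_sq hσ_sq h1_sq) β)
      (exp_ofReal_smul_half_one_add_tp (tp_mul_self_eq_one hσ_sq h1_sq hσ_sq) β))
    (exp_ofReal_smul_half_one_add_tp (tp_mul_self_eq_one h1_sq hσ_sq hσ_sq) (J * β))

/-- The Hamiltonians `H¹², H¹³, H²³` pairwise commute and
`exp(β•H¹² + β•H¹³ + (Jβ)•H²³) = A`. -/
theorem ising_hamiltonians_commute_and_exp_eq_transfer_operator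
    (β J : ℝ) (hβ : 0 < β) (hJ : 0 < J) :
    Commute H12 H13 ∧ Commute H12 H23 ∧ Commute H13 H23 ∧
      NormedSpace.exp ((β : ℂ) • H12 + (β : ℂ) • H13 + ((J * β : ℝ) : ℂ) • H23) = A β J :=
  ising_hamiltonians_commute_and_exp_eq_transfer_operator_general β J
end
end

section
/- The matrix A is Hermitian positive definite (A.PosDef); in particular Aᴴ = A. -/
open Matrix Kronecker
open scoped ComplexOrder

noncomputable section

/-! All three factors are diagonal in the eigenbasis of `σz ⊗ σz ⊗ σz`, with entries
`K₀ ± K₃ ∈ {exp β, 1}` and `R₀ ± R₃ ∈ {exp (J β), 1}`. Hence `A` is a diagonal matrix with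
positive real entries, which is positive definite and in particular Hermitian. -/

def spin : Fin 2 → ℝ := ![1, -1]

lemma abs_spin (i : Fin 2) : |spin i| = 1 := by
  fin_cases i <;> simp [spin]

lemma σz_eq_diagonal : σz = diagonal fun i => (spin i : ℂ) := by
  ext i j; fin_cases i <;> fin_cases j <;> simp [σz, spin]

lemma tp_diagonal (a b c : Fin 2 → ℂ) :
    tp (diagonal a) (diagonal b) (diagonal c) = diagonal fun p => a p.1 * (b p.2.1 * c p.2.2) := by
  rw [tp, diagonal_kronecker_diagonal, diagonal_kronecker_diagonal]

lemma add_mul_pos_of_abs_lt {a b s : ℝ} (h : |b| < a) (hs : |s| = 1) : 0 < a + b * s := by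
  have : |b * s| < a := by rwa [abs_mul, hs, mul_one]
  linarith [neg_abs_le (b * s)]

lemma abs_K₃_lt_K₀ (β : ℝ) : |K₃ β| < K₀ β := by
  have := Real.exp_pos β
  rw [K₀, K₃, abs_lt]; constructor <;> linarith

lemma A_eq_diagonal (β J : ℝ) : A β J = diagonal fun p =>
    (((K₀ β + K₃ β * (spin p.1 * spin p.2.1)) * (K₀ β + K₃ β * (spin p.1 * spin p.2.2)) *
      (R₀ β J + R₃ β J * (spin p.2.1 * spin p.2.2)) : ℝ) : ℂ) := by
  rw [A, K12, K13, L23, σz_eq_diagonal, ← diagonal_one]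
  simp only [tp_diagonal, ← diagonal_smul, diagonal_add, diagonal_mul_diagonal]
  congr 1
  ext p
  simp only [Pi.smul_apply, smul_eq_mul]
  push_cast
  ring

theorem transfer_operator_posDef_general (β J : ℝ) :
    (A β J).PosDef ∧ (A β J)ᴴ = A β J := by
  have hpd : (A β J).PosDef := by
    rw [A_eq_diagonal, posDef_diagonal_iff]
    intro p
    have hspin (i j : Fin 2) : |spin i * spin j| = 1 := by rw [abs_mul, abs_spin, abs_spin, one_mul]
    exact Complex.zero_lt_real.2 <| mul_pos (mul_pos
      (add_mul_pos_of_abs_lt (abs_K₃_lt_K₀ β) (hspin _ _))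
      (add_mul_pos_of_abs_lt (abs_K₃_lt_K₀ β) (hspin _ _)))
      (add_mul_pos_of_abs_lt (abs_K₃_lt_K₀ (J * β) : |R₃ β J| < R₀ β J) (hspin _ _))
  exact ⟨hpd, hpd.isHermitian⟩

/-- The transfer operator `A` is Hermitian positive definite; in particular `Aᴴ = A`. -/
theorem transfer_operator_posDef (β J : ℝ) (hβ : 0 < β) (hJ : 0 < J) :
    (A β J).PosDef ∧ (A β J)ᴴ = A β J :=
  transfer_operator_posDef_general β J
end
end

section
/- For every a ∈ M, α³ * τ₇(ι_{0,1,2}(a) * D) = α * τ₃(a * (Aᴴ * A)). (This is the compatibility of the finite-volume marginals of the quantum Markov chain φ_α: the restriction of the level-2 marginal to the first two levels of the Cayley tree equals the level-1 marginal.) -/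
open Matrix Kronecker

noncomputable section

/-- The normalizing constant `α`. -/
def αc (β J : ℝ) : ℝ :=
  4 / (Real.exp (2 * J * β) * (Real.exp (4 * β) + 1) + 2 * Real.exp (2 * β))

/-- The normalized trace on `M₂ ⊗ M₂ ⊗ M₂`. -/
def τ₃ (m : M3) : ℂ := (1 / 8 : ℂ) * Matrix.trace m

/-- The sevenfold tensor product `M₂^{⊗7}`: sites `0,…,6` are the vertices
`o,(1),(2),(1,1),(1,2),(2,1),(2,2)` of the first three levels of the Cayley tree of order 2. -/
abbrev B7 : Type := Matrix (Fin 7 → Fin 2) (Fin 7 → Fin 2) ℂ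

/-- The unital embedding of `M₂ ⊗ M₂ ⊗ M₂` into `M₂^{⊗7}` acting on sites `p, q, r`. -/
def emb (p q r : Fin 7) (m : M3) : B7 :=
  Matrix.of fun f g =>
    m (f p, f q, f r) (g p, g q, g r) *
      ∏ j ∈ Finset.univ.filter (fun j => j ∉ ({p, q, r} : Finset (Fin 7))),
        (if f j = g j then (1 : ℂ) else 0)

/-- The normalized trace on `M₂^{⊗7}`. -/
def τ₇ (b : B7) : ℂ := (1 / 128 : ℂ) * Matrix.trace b

/-- The level-2 density `D = ι₀₁₂(AᴴA) ι₁₃₄(AᴴA) ι₂₅₆(AᴴA)`. -/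
def D (β J : ℝ) : B7 :=
  emb 0 1 2 ((A β J)ᴴ * A β J) * emb 1 3 4 ((A β J)ᴴ * A β J) * emb 2 5 6 ((A β J)ᴴ * A β J)

abbrev V := Fin 2

def tup (a b c d e f g : V) : Fin 7 → V := ![a,b,c,d,e,f,g]

@[simp] lemma tup0 (a b c d e f g : V) : tup a b c d e f g 0 = a := rfl
@[simp] lemma tup1 (a b c d e f g : V) : tup a b c d e f g 1 = b := rfl
@[simp] lemma tup2 (a b c d e f g : V) : tup a b c d e f g 2 = c := rfl
@[simp] lemma tup3 (a b c d e f g : V) : tup a b c d e f g 3 = d := rfl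
@[simp] lemma tup4 (a b c d e f g : V) : tup a b c d e f g 4 = e := rfl
@[simp] lemma tup5 (a b c d e f g : V) : tup a b c d e f g 5 = f := rfl
@[simp] lemma tup6 (a b c d e f g : V) : tup a b c d e f g 6 = g := rfl

def e7 : (V × V × V × V × V × V × V) ≃ (Fin 7 → V) where
  toFun t := tup t.1 t.2.1 t.2.2.1 t.2.2.2.1 t.2.2.2.2.1 t.2.2.2.2.2.1 t.2.2.2.2.2.2
  invFun f := (f 0, f 1, f 2, f 3, f 4, f 5, f 6)
  left_inv t := rfl
  right_inv f := by funext i; fin_cases i <;> rfl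

lemma sum_fin7 (F : (Fin 7 → V) → ℂ) :
    ∑ f, F f = ∑ a, ∑ b, ∑ c, ∑ d, ∑ e, ∑ x, ∑ y, F (tup a b c d e x y) := by
  rw [← Equiv.sum_comp e7 F]
  simp only [Fintype.sum_prod_type]
  rfl

lemma emb012_apply (m : M3) (f g : Fin 7 → V) :
    emb 0 1 2 m f g = m (f 0, f 1, f 2) (g 0, g 1, g 2) *
      ((if f 3 = g 3 then 1 else 0) * ((if f 4 = g 4 then 1 else 0) *
       ((if f 5 = g 5 then 1 else 0) * (if f 6 = g 6 then (1:ℂ) else 0)))) := by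
  simp only [emb, Matrix.of_apply]
  congr 1
  rw [show (Finset.univ.filter (fun j => j ∉ ({0,1,2} : Finset (Fin 7)))) = {3,4,5,6} from by decide]
  rw [show ({3,4,5,6} : Finset (Fin 7)) = insert 3 (insert 4 (insert 5 {6})) from rfl]
  rw [Finset.prod_insert (by decide), Finset.prod_insert (by decide),
    Finset.prod_insert (by decide), Finset.prod_singleton]

lemma emb134_apply (m : M3) (f g : Fin 7 → V) :
    emb 1 3 4 m f g = m (f 1, f 3, f 4) (g 1, g 3, g 4) *
      ((if f 0 = g 0 then 1 else 0) * ((if f 2 = g 2 then 1 else 0) *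
       ((if f 5 = g 5 then 1 else 0) * (if f 6 = g 6 then (1:ℂ) else 0)))) := by
  simp only [emb, Matrix.of_apply]
  congr 1
  rw [show (Finset.univ.filter (fun j => j ∉ ({1,3,4} : Finset (Fin 7)))) = {0,2,5,6} from by decide]
  rw [show ({0,2,5,6} : Finset (Fin 7)) = insert 0 (insert 2 (insert 5 {6})) from rfl]
  rw [Finset.prod_insert (by decide), Finset.prod_insert (by decide),
    Finset.prod_insert (by decide), Finset.prod_singleton]

lemma emb256_apply (m : M3) (f g : Fin 7 → V) :
    emb 2 5 6 m f g = m (f 2, f 5, f 6) (g 2, g 5, g 6) *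
      ((if f 0 = g 0 then 1 else 0) * ((if f 1 = g 1 then 1 else 0) *
       ((if f 3 = g 3 then 1 else 0) * (if f 4 = g 4 then (1:ℂ) else 0)))) := by
  simp only [emb, Matrix.of_apply]
  congr 1
  rw [show (Finset.univ.filter (fun j => j ∉ ({2,5,6} : Finset (Fin 7)))) = {0,1,3,4} from by decide]
  rw [show ({0,1,3,4} : Finset (Fin 7)) = insert 0 (insert 1 (insert 3 {4})) from rfl]
  rw [Finset.prod_insert (by decide), Finset.prod_insert (by decide),
    Finset.prod_insert (by decide), Finset.prod_singleton]
lemma fin2_cases (v : Fin 2) : v = 0 ∨ v = 1 := by omega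

lemma collapseX (m : M3) (f : Fin 7 → V) (W : (Fin 7 → V) → ℂ) :
    ∑ g, emb 0 1 2 m f g * W g
      = ∑ a, ∑ b, ∑ c, m (f 0, f 1, f 2) (a, b, c) * W (tup a b c (f 3) (f 4) (f 5) (f 6)) := by
  rw [sum_fin7 (fun g => emb 0 1 2 m f g * W g)]
  have h3 := fin2_cases (f 3)
  have h4 := fin2_cases (f 4)
  have h5 := fin2_cases (f 5)
  have h6 := fin2_cases (f 6)
  rcases h3 with h3 | h3 <;> rcases h4 with h4 | h4 <;> rcases h5 with h5 | h5 <;>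
    rcases h6 with h6 | h6 <;>
    simp [emb012_apply, h3, h4, h5, h6, Fin.sum_univ_two]

lemma collapseZ (n : M3) (f : Fin 7 → V) (W : (Fin 7 → V) → ℂ) :
    ∑ g, W g * emb 2 5 6 n g f
      = ∑ x, ∑ y, ∑ z, W (tup (f 0) (f 1) x (f 3) (f 4) y z) * n (x, y, z) (f 2, f 5, f 6) := by
  rw [sum_fin7 (fun g => W g * emb 2 5 6 n g f)]
  have h0 := fin2_cases (f 0)
  have h1 := fin2_cases (f 1)
  have h3 := fin2_cases (f 3)
  have h4 := fin2_cases (f 4)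
  rcases h0 with h0 | h0 <;> rcases h1 with h1 | h1 <;> rcases h3 with h3 | h3 <;>
    rcases h4 with h4 | h4 <;>
    simp [emb256_apply, h0, h1, h3, h4, Fin.sum_univ_two]
lemma emb012_mul (m n : M3) : emb 0 1 2 m * emb 0 1 2 n = emb 0 1 2 (m * n) := by
  ext f g
  rw [Matrix.mul_apply, collapseX]
  simp only [emb012_apply, tup0, tup1, tup2, tup3, tup4, tup5, tup6, Matrix.mul_apply,
    Fintype.sum_prod_type]
  simp only [Fin.sum_univ_two, Finset.sum_mul]
  simp only [add_mul, mul_assoc]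
  rfl
lemma emb134_tup (m : M3) (a b c d e x y a' b' c' d' e' x' y' : V) :
    emb 1 3 4 m (tup a b c d e x y) (tup a' b' c' d' e' x' y') = m (b, d, e) (b', d', e') *
      ((if a = a' then 1 else 0) * ((if c = c' then 1 else 0) *
       ((if x = x' then 1 else 0) * (if y = y' then (1:ℂ) else 0)))) :=
  emb134_apply m _ _
lemma key_pointwise (bM n : M3) (t0 t1 t2 t3 t4 t5 t6 : V) :
    (emb 0 1 2 bM * emb 1 3 4 n * emb 2 5 6 n) (tup t0 t1 t2 t3 t4 t5 t6)
        (tup t0 t1 t2 t3 t4 t5 t6)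
      = ∑ b : V, ∑ x : V, bM (t0,t1,t2) (t0,b,x) *
          (n (b,t3,t4) (t1,t3,t4) * n (x,t5,t6) (t2,t5,t6)) := by
  simp only [Matrix.mul_apply]
  rw [collapseZ]
  simp only [collapseX, tup0, tup1, tup2, tup3, tup4, tup5, tup6, emb134_tup]
  simp only [mul_ite, ite_mul, mul_zero, zero_mul, mul_one, one_mul,
    Finset.sum_ite_irrel, Finset.sum_const_zero, Finset.sum_ite_eq, Finset.sum_ite_eq',
    Finset.mem_univ, if_true]
  simp only [Fin.sum_univ_two]
  ring

set_option maxHeartbeats 1600000 in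
lemma trace_triple (bM n : M3) (c : ℂ)
    (hP : ∀ i j : V, (∑ x : V, ∑ y : V, n (i,x,y) (j,x,y)) = if i = j then c else 0) :
    Matrix.trace (emb 0 1 2 bM * emb 1 3 4 n * emb 2 5 6 n) = c ^ 2 * Matrix.trace bM := by
  have key : Matrix.trace (emb 0 1 2 bM * emb 1 3 4 n * emb 2 5 6 n)
      = ∑ t0 : V, ∑ t1 : V, ∑ t2 : V, ∑ b : V, ∑ x : V,
          bM (t0,t1,t2) (t0,b,x) *
            ((∑ u : V, ∑ v : V, n (b,u,v) (t1,u,v)) *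
             (∑ u : V, ∑ v : V, n (x,u,v) (t2,u,v))) := by
    rw [Matrix.trace]
    simp only [Matrix.diag_apply]
    rw [sum_fin7]
    simp only [key_pointwise]
    simp only [Fin.sum_univ_two]
    ring
  rw [key]
  simp only [hP]
  rw [Matrix.trace]
  simp only [Matrix.diag_apply, Fintype.sum_prod_type, Fin.sum_univ_two, Fin.reduceEq,
    reduceIte, mul_zero, zero_mul, mul_one, one_mul, add_zero, zero_add, mul_ite, ite_mul]
  ring
def dd (β J : ℝ) (p : V × V × V) : ℝ :=
  (if p.1 = p.2.1 then Real.exp β else 1) * ((if p.1 = p.2.2 then Real.exp β else 1) *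
    (if p.2.1 = p.2.2 then Real.exp (J * β) else 1))

set_option maxHeartbeats 1600000 in
lemma K12_eq (β : ℝ) : K12 β
    = Matrix.diagonal (fun p : V × V × V => (((if p.1 = p.2.1 then Real.exp β else 1) : ℝ) : ℂ)) := by
  ext ⟨i, x, y⟩ ⟨j, u, v⟩
  fin_cases i <;> fin_cases x <;> fin_cases y <;> fin_cases j <;> fin_cases u <;> fin_cases v <;>
    simp [K12, tp, σz, K₀, K₃, Matrix.diagonal_apply, Matrix.kroneckerMap_apply,
      Matrix.one_apply, Prod.ext_iff] <;> push_cast <;> ring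

set_option maxHeartbeats 1600000 in
lemma K13_eq (β : ℝ) : K13 β
    = Matrix.diagonal (fun p : V × V × V => (((if p.1 = p.2.2 then Real.exp β else 1) : ℝ) : ℂ)) := by
  ext ⟨i, x, y⟩ ⟨j, u, v⟩
  fin_cases i <;> fin_cases x <;> fin_cases y <;> fin_cases j <;> fin_cases u <;> fin_cases v <;>
    simp [K13, tp, σz, K₀, K₃, Matrix.diagonal_apply, Matrix.kroneckerMap_apply,
      Matrix.one_apply, Prod.ext_iff] <;> push_cast <;> ring

set_option maxHeartbeats 1600000 in
lemma L23_eq (β J : ℝ) : L23 β J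
    = Matrix.diagonal (fun p : V × V × V => (((if p.2.1 = p.2.2 then Real.exp (J * β) else 1) : ℝ) : ℂ)) := by
  ext ⟨i, x, y⟩ ⟨j, u, v⟩
  fin_cases i <;> fin_cases x <;> fin_cases y <;> fin_cases j <;> fin_cases u <;> fin_cases v <;>
    simp [L23, tp, σz, R₀, R₃, Matrix.diagonal_apply, Matrix.kroneckerMap_apply,
      Matrix.one_apply, Prod.ext_iff] <;> push_cast <;> ring

lemma A_eq (β J : ℝ) : A β J = Matrix.diagonal (fun p => ((dd β J p : ℝ) : ℂ)) := by
  rw [A, K12_eq, K13_eq, L23_eq, Matrix.diagonal_mul_diagonal, Matrix.diagonal_mul_diagonal]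
  apply congrArg Matrix.diagonal
  funext ⟨i, x, y⟩
  fin_cases i <;> fin_cases x <;> fin_cases y <;> simp [dd] <;> push_cast <;> ring
def cc (β J : ℝ) : ℝ :=
  Real.exp (2 * J * β) * (Real.exp (4 * β) + 1) + 2 * Real.exp (2 * β)

lemma ptrace (β J : ℝ) (i j : V) :
    (∑ x : V, ∑ y : V, ((A β J)ᴴ * A β J) (i,x,y) (j,x,y)) = if i = j then ((cc β J : ℝ) : ℂ) else 0 := by
  rw [A_eq, Matrix.diagonal_conjTranspose, Matrix.diagonal_mul_diagonal]
  have e2 : Real.exp (2 * β) = Real.exp β * Real.exp β := by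
    rw [← Real.exp_add]; ring_nf
  have e4 : Real.exp (4 * β) = Real.exp β * Real.exp β * (Real.exp β * Real.exp β) := by
    rw [show (4:ℝ) * β = β + β + (β + β) by ring, Real.exp_add, Real.exp_add]
  have eJ : Real.exp (2 * J * β) = Real.exp (J * β) * Real.exp (J * β) := by
    rw [← Real.exp_add]; ring_nf
  fin_cases i <;> fin_cases j <;>
    simp [Matrix.diagonal_apply, Prod.ext_iff, dd, cc, Fin.sum_univ_two, e2, e4, eJ,
      Pi.star_apply, star_trivial] <;>
    push_cast <;> ring

lemma cc_pos (β J : ℝ) : 0 < cc β J := by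
  unfold cc
  positivity

lemma alpha_mul_cc (β J : ℝ) : αc β J * cc β J = 4 := by
  have h : cc β J ≠ 0 := ne_of_gt (cc_pos β J)
  rw [αc]
  rw [show Real.exp (2 * J * β) * (Real.exp (4 * β) + 1) + 2 * Real.exp (2 * β) = cc β J from rfl]
  field_simp

/-- Compatibility of the finite-volume marginals of the quantum Markov chain `φ_α`:
the restriction of the level-2 marginal to the first two levels equals the level-1 marginal. -/
theorem marginal_compatibility (β J : ℝ) (hβ : 0 < β) (hJ : 0 < J) (a : M3) :
    ((αc β J : ℝ) : ℂ) ^ 3 * τ₇ (emb 0 1 2 a * D β J) =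
      ((αc β J : ℝ) : ℂ) * τ₃ (a * ((A β J)ᴴ * A β J)) := by
  have hD : emb 0 1 2 a * D β J
      = emb 0 1 2 (a * ((A β J)ᴴ * A β J)) * emb 1 3 4 ((A β J)ᴴ * A β J) *
          emb 2 5 6 ((A β J)ᴴ * A β J) := by
    rw [D, ← mul_assoc, ← mul_assoc, emb012_mul]
  rw [hD, τ₇, τ₃,
    trace_triple (a * ((A β J)ᴴ * A β J)) ((A β J)ᴴ * A β J) (((cc β J : ℝ) : ℂ)) (ptrace β J)]
  have h4 : ((αc β J : ℝ) : ℂ) * ((cc β J : ℝ) : ℂ) = 4 := by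
    rw [← Complex.ofReal_mul, alpha_mul_cc]
    norm_num
  set T := Matrix.trace (a * ((A β J)ᴴ * A β J)) with hT
  set α' := ((αc β J : ℝ) : ℂ) with hα
  set c' := ((cc β J : ℝ) : ℂ) with hc
  linear_combination (T * α' * (α' * c' + 4) / 128) * h4
end
end

section
/- Let V' be a nonempty set of vertices of the tree G such that the subgraph induced by G on V' is connected. Then there exists a unique vertex o' ∈ V' realizing the distance from the root to V': o' ∈ V' and d o o' ≤ d o x for all x ∈ V', and any o'' ∈ V' with this property equals o'. (The vertex o' is the root of the subtree with vertex set V'.) -/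
/-! If `o'` and `o''` in `V'` are both at minimal distance `k` from `o`, join `o''` to `o'` by a
path `p` inside `V'`. Every vertex of a geodesic from `o` to `o''` other than `o''` is at distance
`< k`, so prefixing `p` with that geodesic gives a path from `o` to `o'`. In a tree every path is
a geodesic, so `k + p.length = k` and `o'' = o'`. -/

namespace SimpleGraph

variable {V : Type*} {G : SimpleGraph V} {u v w : V}

theorem Walk.IsPath.append {p : G.Walk u v} {q : G.Walk v w} (hp : p.IsPath) (hq : q.IsPath)
    (h : p.support.Disjoint q.support.tail) : (p.append q).IsPath := by
  rw [Walk.isPath_def, Walk.support_append]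
  exact hp.support_nodup.append (hq.support_nodup.sublist q.support.tail_sublist) h

theorem Walk.dist_lt_of_length_eq_dist {p : G.Walk u v} (hp : p.length = G.dist u v)
    (hw : w ∈ p.support) (hwv : w ≠ v) : G.dist u w < G.dist u v := by
  obtain ⟨r, s, rfl⟩ := p.mem_support_iff_exists_append.mp hw
  have hs : 0 < s.length := Nat.pos_of_ne_zero fun h => hwv (Walk.eq_of_length_eq_zero h)
  rw [Walk.length_append] at hp
  have := dist_le r
  omega

theorem IsAcyclic.length_eq_dist_of_isPath (hG : G.IsAcyclic) {p : G.Walk u v} (hp : p.IsPath) :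
    p.length = G.dist u v := by
  obtain ⟨q, hq, hql⟩ := p.reachable.exists_path_of_dist
  have hpq : p = q := congrArg Subtype.val ((hG.subsingleton_path u v).elim ⟨p, hp⟩ ⟨q, hq⟩)
  rw [← hql, hpq]

theorem IsAcyclic.eq_of_isPath_of_dist_le {o a b : V} (hG : G.IsAcyclic) (ho : G.Reachable o a)
    {p : G.Walk a b} (hp : p.IsPath) (hpo : ∀ x ∈ p.support, G.dist o a ≤ G.dist o x)
    (hb : G.dist o b ≤ G.dist o a) : a = b := by
  obtain ⟨q, hq, hql⟩ := ho.exists_path_of_dist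
  have ha : a ∉ p.support.tail := by
    have := hp.support_nodup
    rw [← Walk.cons_tail_support] at this
    exact (List.nodup_cons.mp this).1
  have hdisj : q.support.Disjoint p.support.tail := by
    intro x hxq hxp
    obtain rfl : x = a := by
      by_contra hxa
      exact (hpo x (List.mem_of_mem_tail hxp)).not_gt (q.dist_lt_of_length_eq_dist hql hxq hxa)
    exact ha hxp
  have hlen := hG.length_eq_dist_of_isPath (hq.append hp hdisj)
  rw [Walk.length_append, hql] at hlen
  exact Walk.eq_of_length_eq_zero (p := p) (by omega)

end SimpleGraph

open SimpleGraph in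
/-- Any nonempty connected set of vertices `V'` of a tree admits a unique vertex `o'`
realizing the distance from the root to `V'`; `o'` is the root of the subtree `V'`. -/
theorem subtree_has_unique_root {V : Type*} (G : SimpleGraph V) (hG : G.IsTree) (o : V)
    (V' : Set V) (hne : V'.Nonempty) (hconn : (G.induce V').Connected) :
    ∃! o' : V, o' ∈ V' ∧ ∀ x ∈ V', G.dist o o' ≤ G.dist o x := by
  classical
  obtain ⟨o', ho', hmin⟩ : ∃ o' ∈ V', ∀ x ∈ V', G.dist o o' ≤ G.dist o x :=
    ⟨_, Function.argminOn_mem _ V' hne, fun x hx => Function.argminOn_le _ V' hx⟩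
  refine ⟨o', ⟨ho', hmin⟩, fun o'' ⟨ho'', hmin''⟩ => ?_⟩
  obtain ⟨p⟩ := hconn.preconnected ⟨o'', ho''⟩ ⟨o', ho'⟩
  let q : G.Walk o'' o' := p.map (Embedding.induce V').toHom
  have hqV' : ∀ x ∈ q.support, x ∈ V' := fun x hx => by
    obtain ⟨y, -, rfl⟩ := List.mem_map.mp ((Walk.support_map _ p) ▸ hx)
    exact y.2
  exact hG.isAcyclic.eq_of_isPath_of_dist_le (hG.connected o o'') q.bypass_isPath
    (fun x hx => hmin'' x (hqV' x (q.support_bypass_subset_support hx))) (hmin o'' ho'')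
end
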